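/- Let S be a finite set, let P and Q be probability distributions on S, and let ε, γ ≥ 0 with ε < 1. Suppose that for every event E ⊆ S, Q(E) ≥ exp(−ε)·P(E) − γ. Then for every function V : S → [0,1], the difference of expectations satisfies Σ_{s ∈ S} V(s)·(P(s) − Q(s)) ≤ ε + γ. -/

import Mathlib

/-!
Since `0 ≤ V ≤ 1`, the gap `∑ V (P - Q)` is at most the total positive part of `P - Q`, that is
`P(E) - Q(E)` for the event `E = {Q < P}`. The eventwise hypothesis on `E` bounds this by
`(1 - exp (-ε)) P(E) + γ`, and `1 - exp (-ε) ≤ ε` together with `P(E) ≤ 1` gives `ε + γ`.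
-/

open Finset in
theorem Finset.sum_mul_le_sum_filter_pos {ι R : Type*} [Ring R] [LinearOrder R]
    [IsStrictOrderedRing R] (s : Finset ι) (V f : ι → R) (hV : ∀ i ∈ s, V i ∈ Set.Icc 0 1) :
    ∑ i ∈ s, V i * f i ≤ ∑ i ∈ s with 0 < f i, f i := by
  rw [sum_filter]
  refine sum_le_sum fun i hi => ?_
  obtain ⟨hV0, hV1⟩ := hV i hi
  split_ifs with hf
  · exact mul_le_of_le_one_left hf.le hV1
  · exact mul_nonpos_of_nonneg_of_nonpos hV0 (not_lt.mp hf)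

theorem sub_le_add_of_exp_neg_mul_sub_le {ε γ p q : ℝ} (hε : 0 ≤ ε) (hp : p ≤ 1)
    (h : Real.exp (-ε) * p - γ ≤ q) : p - q ≤ ε + γ := by
  have hexp_le_one : Real.exp (-ε) ≤ 1 := Real.exp_le_one_iff.mpr (neg_nonpos.mpr hε)
  have hone_sub_exp : 1 - Real.exp (-ε) ≤ ε := by linarith [Real.one_sub_le_exp_neg ε]
  calc p - q ≤ (1 - Real.exp (-ε)) * p + γ := by linarith
    _ ≤ (1 - Real.exp (-ε)) * 1 + γ := by gcongr
    _ ≤ ε + γ := by linarith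

theorem expectation_gap_of_eventwise_dp_general {S : Type*} [Fintype S]
    (P Q : S → ℝ)
    (hP0 : ∀ s, 0 ≤ P s)
    (hP1 : ∑ s, P s = 1)
    (ε γ : ℝ) (hε0 : 0 ≤ ε)
    (hDP : ∀ E : Finset S, Real.exp (-ε) * (∑ s ∈ E, P s) - γ ≤ ∑ s ∈ E, Q s)
    (V : S → ℝ) (hV : ∀ s, V s ∈ Set.Icc (0 : ℝ) 1) :
    ∑ s, V s * (P s - Q s) ≤ ε + γ := by
  classical
  set E := Finset.univ.filter fun s => 0 < P s - Q s
  have hPE : ∑ s ∈ E, P s ≤ 1 := hP1 ▸ Finset.sum_le_univ_sum_of_nonneg hP0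
  calc ∑ s, V s * (P s - Q s) ≤ ∑ s ∈ E, (P s - Q s) :=
        Finset.sum_mul_le_sum_filter_pos _ V _ fun s _ => hV s
    _ = ∑ s ∈ E, P s - ∑ s ∈ E, Q s := Finset.sum_sub_distrib ..
    _ ≤ ε + γ := sub_le_add_of_exp_neg_mul_sub_le hε0 hPE (hDP E)

/-- **Key expectation-gap lemma.**  Let `S` be a finite set, `P` and `Q` probability
distributions on `S`, and `ε, γ ≥ 0` with `ε < 1`.  If for every event `E ⊆ S` we have
`Q(E) ≥ exp(-ε)·P(E) - γ`, then for every function `V : S → [0,1]`,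
`∑ s, V s * (P s - Q s) ≤ ε + γ`. -/
theorem expectation_gap_of_eventwise_dp {S : Type*} [Fintype S]
    (P Q : S → ℝ)
    (hP0 : ∀ s, 0 ≤ P s) (hQ0 : ∀ s, 0 ≤ Q s)
    (hP1 : ∑ s, P s = 1) (hQ1 : ∑ s, Q s = 1)
    (ε γ : ℝ) (hε0 : 0 ≤ ε) (hγ0 : 0 ≤ γ) (hε1 : ε < 1)
    (hDP : ∀ E : Finset S, Real.exp (-ε) * (∑ s ∈ E, P s) - γ ≤ ∑ s ∈ E, Q s)
    (V : S → ℝ) (hV : ∀ s, V s ∈ Set.Icc (0 : ℝ) 1) :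
    ∑ s, V s * (P s - Q s) ≤ ε + γ :=
  expectation_gap_of_eventwise_dp_general P Q hP0 hP1 ε γ hε0 hDP V hV
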